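/- arXiv:1503.03820 — 2 statements merged into one kernel-verified Lean document; each statement's English description precedes it below -/
import Mathlib

section
/- For any topology T on a finite set X, there exists a unique topology T' with T' ⊚≺ T and ≤_{T'} an equivalence relation, namely the topology with ≤_{T'} = ∼_T; moreover for this T', T/T' = T. Dually, T itself is the unique topology T'' with T'' ⊚≺ T such that ≤_{T/T''} is an equivalence relation. -/
variable {X : Type*}

/-- The specialization quasi-order of a topology: `x ≤_T y` iff every
`T`-open set containing `x` contains `y`. -/
def leT (t : TopologicalSpace X) (x y : X) : Prop :=
  ∀ U : Set X, t.IsOpen U → x ∈ U → y ∈ U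

/-- The specialization equivalence `∼_T`. -/
def simT (t : TopologicalSpace X) (x y : X) : Prop :=
  leT t x y ∧ leT t y x

/-- The topology of final segments of a relation `r`. -/
def topOfRel (r : X → X → Prop) : TopologicalSpace X where
  IsOpen U := ∀ x ∈ U, ∀ y, r x y → y ∈ U
  isOpen_univ := fun _ _ y _ => Set.mem_univ y
  isOpen_inter := fun U V hU hV x hx y hr => ⟨hU x hx.1 y hr, hV x hx.2 y hr⟩
  isOpen_sUnion := fun S hS x hx y hr => by
    obtain ⟨U, hU, hxU⟩ := hx
    exact ⟨U, hU, hS U hU x hxU y hr⟩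

/-- `T'` is finer than `T`: every `T`-open set is `T'`-open. -/
def finer (t' t : TopologicalSpace X) : Prop :=
  ∀ U : Set X, t.IsOpen U → t'.IsOpen U

/-- The quasi-order of the quotient topology `T/T'`: the transitive closure of
`x R y ↔ (x ≤_T y or y ≤_{T'} x)`. -/
def quotRel (t t' : TopologicalSpace X) : X → X → Prop :=
  Relation.ReflTransGen (fun x y => leT t x y ∨ leT t' y x)

/-- The quotient topology `T/T'`. -/
def quotTop (t t' : TopologicalSpace X) : TopologicalSpace X :=
  topOfRel (quotRel t t')

/-- Restriction (subspace topology) of `t` to a subset `Y`. -/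
def restrictT (t : TopologicalSpace X) (Y : Set X) : TopologicalSpace Y :=
  t.induced Subtype.val

/-- `T'` is `T`-admissible (`T' ⊚≺ T`). -/
def adm (t' t : TopologicalSpace X) : Prop :=
  finer t' t ∧
  (∀ Y : Set X, @IsConnected X t' Y → restrictT t' Y = restrictT t Y) ∧
  (∀ x y : X,
    (quotRel t t' x y ∧ quotRel t t' y x) ↔ (quotRel t' t' x y ∧ quotRel t' t' y x))

/-!
A finite topology is determined by its specialization quasi-order, so everything reduces to
relations. An admissible `T'` is finer than `T`, so `≤_{T'} ⊆ ≤_T`; if `≤_{T'}` is symmetric this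
puts it inside `∼_T`, and the admissibility condition on the classes of `T/T'` and `T'` gives
equality. Conversely the topology `T₀` with `≤_{T₀} = ∼_T` is admissible: its connected sets lie
in `∼_T`-classes, on which `T₀` and `T` both induce the indiscrete topology.

Dually, if `≤_{T/T''}` is symmetric then every `x ≤_T y` becomes an equivalence of `T/T''`, hence
of `T''`, so `x` and `y` lie in one `T''`-connected component. There `T''` and `T` induce the same
topology, which gives `x ≤_{T''} y`.
-/

open Relation Topology

theorem Specializes.connectedComponent_eq {α : Type*} [TopologicalSpace α] {x y : α}
    (h : x ⤳ y) : connectedComponent x = connectedComponent y :=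
  _root_.connectedComponent_eq <| isPreconnected_singleton.closure.subset_connectedComponent
    (subset_closure rfl) (specializes_iff_mem_closure.mp h)

section Specialization

variable {t t' : TopologicalSpace X}

theorem leT_iff_specializes {x y : X} : leT t x y ↔ @Specializes X t y x :=
  (@specializes_iff_forall_open X t y x).symm

instance (t : TopologicalSpace X) : Std.Refl (leT t) :=
  ⟨fun _ _ _ hx => hx⟩

instance (t : TopologicalSpace X) : IsTrans X (leT t) :=
  ⟨fun _ _ _ hxy hyz U hU hx => hyz U hU (hxy U hU hx)⟩

theorem simT_equivalence (t : TopologicalSpace X) : Equivalence (simT t) :=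
  ⟨fun x => ⟨refl x, refl x⟩, And.symm,
    fun hxy hyz => ⟨_root_.trans hxy.1 hyz.1, _root_.trans hyz.2 hxy.2⟩⟩

theorem finer.leT_le (h : finer t' t) : leT t' ≤ leT t :=
  fun _ _ hxy U hU => hxy U (h U hU)

theorem isOpen_iff_forall_leT [Finite X] {U : Set X} :
    IsOpen[t] U ↔ ∀ x y, leT t x y → x ∈ U → y ∈ U := by
  let _ := t
  simp only [leT_iff_specializes]
  exact isOpen_iff_forall_specializes.trans forall_comm

theorem eq_of_leT_eq [Finite X] (h : leT t = leT t') : t = t' := by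
  ext U
  rw [isOpen_iff_forall_leT, isOpen_iff_forall_leT, h]

theorem leT_restrictT {Y : Set X} {a b : Y} : leT (restrictT t Y) a b ↔ leT t a b := by
  rw [leT_iff_specializes, leT_iff_specializes]
  exact @subtype_specializes_iff X t _ b a

theorem leT_iff_of_restrictT_eq {Y : Set X} (h : restrictT t' Y = restrictT t Y) {x y : X}
    (hx : x ∈ Y) (hy : y ∈ Y) : leT t' x y ↔ leT t x y := by
  rw [← leT_restrictT (a := ⟨x, hx⟩) (b := ⟨y, hy⟩), h, leT_restrictT]

theorem restrictT_eq_top {Y : Set X} (h : ∀ a ∈ Y, ∀ b ∈ Y, leT t a b) : restrictT t Y = ⊤ := by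
  refine (TopologicalSpace.indiscrete_iff_forall_inseparable.mpr fun a b => ?_).eq_top
  rw [@inseparable_iff_specializes_and, ← leT_iff_specializes, ← leT_iff_specializes,
    leT_restrictT, leT_restrictT]
  exact ⟨h b b.2 a a.2, h a a.2 b b.2⟩

theorem connectedComponent_eq_of_quotRel_self {x y : X} (h : quotRel t t x y) :
    @connectedComponent X t x = @connectedComponent X t y := by
  let _ := t
  refine reflTransGen_le_of_equivalence_of_le
    (r := fun a b => connectedComponent a = connectedComponent b)
    ⟨fun _ => rfl, Eq.symm, Eq.trans⟩ ?_ x y h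
  rintro a b (hab | hba)
  · exact (leT_iff_specializes.mp hab).connectedComponent_eq.symm
  · exact (leT_iff_specializes.mp hba).connectedComponent_eq

end Specialization

section Relations

variable {t t' : TopologicalSpace X} {r : X → X → Prop}

theorem leT_topOfRel (r : X → X → Prop) : leT (topOfRel r) = ReflTransGen r :=
  le_antisymm (fun x _ h => h {z | ReflTransGen r x z} (fun _ ha _ hab => ha.tail hab) .refl)
    (reflTransGen_le_of_le fun _ _ hab _ hU ha => hU _ ha _ hab)

theorem leT_topOfRel_of_equivalence (hr : Equivalence r) : leT (topOfRel r) = r := by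
  rw [leT_topOfRel, @reflTransGen_eq_self _ _ hr.stdRefl hr.isTrans]

theorem leT_quotTop : leT (quotTop t t') = quotRel t t' := by
  rw [quotTop, leT_topOfRel, quotRel, reflTransGen_eq_self]

theorem leT_le_quotRel : leT t ≤ quotRel t t' :=
  fun _ _ h => .single (.inl h)

theorem quotRel_eq_leT (h : leT t' ≤ flip (leT t)) : quotRel t t' = leT t :=
  le_antisymm (reflTransGen_le_of_le fun x y hxy => hxy.elim id (h y x)) leT_le_quotRel

theorem quotRel_self_equivalence (t : TopologicalSpace X) : Equivalence (quotRel t t) :=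
  ⟨fun _ => .refl, fun h => (ReflTransGen.stdSymm (r := SymmGen (leT t))).symm _ _ h,
    ReflTransGen.trans⟩

theorem isClopen_setOf_topOfRel (hr : Equivalence r) (a : X) :
    @IsClopen X (topOfRel r) {b | r a b} :=
  ⟨@IsClosed.mk X (topOfRel r) _ fun _ hb _ hbc hc => hb (hr.trans hc (hr.symm hbc)),
    fun _ hb _ hbc => hr.trans hb hbc⟩

theorem IsPreconnected.rel_of_topOfRel (hr : Equivalence r) {Y : Set X}
    (hY : @IsPreconnected X (topOfRel r) Y) {a b : X} (ha : a ∈ Y) (hb : b ∈ Y) : r a b :=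
  @IsPreconnected.subset_isClopen X (topOfRel r) _ _ hY (isClopen_setOf_topOfRel hr a)
    ⟨a, ha, hr.refl a⟩ b hb

end Relations

section Admissible

variable {t t' : TopologicalSpace X}

theorem adm_topOfRel_simT (t : TopologicalSpace X) : adm (topOfRel (simT t)) t := by
  have hleT := leT_topOfRel_of_equivalence (simT_equivalence t)
  refine ⟨fun U hU a ha b hab => hab.1 U hU ha, fun Y hY => ?_, fun x y => ?_⟩
  · have hclass (a) (ha : a ∈ Y) (b) (hb : b ∈ Y) : simT t a b :=
      hY.2.rel_of_topOfRel (simT_equivalence t) ha hb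
    rw [restrictT_eq_top (by rwa [hleT]), restrictT_eq_top fun a ha b hb => (hclass a ha b hb).1]
  · rw [quotRel_eq_leT (by rw [hleT]; exact fun a b h => h.2),
      quotRel_eq_leT (by rw [hleT]; exact fun a b h => (simT_equivalence t).symm h), hleT]
    exact ⟨fun h => ⟨h, h.symm⟩, And.left⟩

theorem adm.leT_eq_simT (hA : adm t' t) (hE : Equivalence (leT t')) : leT t' = simT t := by
  refine le_antisymm (fun x y h => ⟨hA.1.leT_le x y h, hA.1.leT_le y x (hE.symm h)⟩)
    fun x y h => ?_
  have hQ := ((hA.2.2 x y).mp ⟨leT_le_quotRel x y h.1, leT_le_quotRel y x h.2⟩).1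
  rwa [quotRel_eq_leT fun _ _ => hE.symm] at hQ

theorem adm.quotTop_eq [Finite X] (hA : adm t' t) (hE : Equivalence (leT t')) :
    quotTop t t' = t :=
  eq_of_leT_eq <| by rw [leT_quotTop, quotRel_eq_leT (hA.leT_eq_simT hE ▸ fun _ _ h => h.2)]

theorem adm.eq_of_equivalence_leT_quotTop [Finite X] (hA : adm t' t)
    (hE : Equivalence (leT (quotTop t t'))) : t' = t := by
  refine eq_of_leT_eq (le_antisymm hA.1.leT_le fun x y h => ?_)
  rw [leT_quotTop] at hE
  have hxy : quotRel t t' x y := leT_le_quotRel x y h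
  have hQ := ((hA.2.2 x y).mp ⟨hxy, hE.symm hxy⟩).1
  let _ := t'
  have hy : y ∈ connectedComponent x := by
    rw [connectedComponent_eq_of_quotRel_self hQ]
    exact mem_connectedComponent
  exact (leT_iff_of_restrictT_eq (hA.2.1 _ isConnected_connectedComponent)
    mem_connectedComponent hy).mpr h

end Admissible

/-- There is a unique admissible `T' ⊚≺ T` whose quasi-order is an equivalence,
namely the one with quasi-order `∼_T`, and for it `T/T' = T`; dually, `T` is the
unique `T'' ⊚≺ T` whose quotient `T/T''` has equivalence quasi-order. -/
theorem unique_grouplike_admissible [Finite X] (t : TopologicalSpace X) :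
    (∃! t' : TopologicalSpace X, adm t' t ∧ Equivalence (leT t')) ∧
    (∀ t' : TopologicalSpace X, adm t' t → Equivalence (leT t') →
      (∀ x y : X, leT t' x y ↔ simT t x y) ∧ quotTop t t' = t) ∧
    (∀ t'' : TopologicalSpace X, adm t'' t →
      (Equivalence (leT (quotTop t t'')) ↔ t'' = t)) := by
  have hleT := leT_topOfRel_of_equivalence (simT_equivalence t)
  refine ⟨⟨topOfRel (simT t), ⟨adm_topOfRel_simT t, hleT.symm ▸ simT_equivalence t⟩, ?_⟩,
    fun t' hA hE => ⟨fun x y => by rw [hA.leT_eq_simT hE], hA.quotTop_eq hE⟩,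
    fun t'' hA => ⟨hA.eq_of_equivalence_leT_quotTop, ?_⟩⟩
  · rintro t' ⟨hA, hE⟩
    exact eq_of_leT_eq (by rw [hA.leT_eq_simT hE, hleT])
  · rintro rfl
    rw [leT_quotTop]
    exact quotRel_self_equivalence _
end

section
/- Let T be a topology on a finite set X and T' ⊚≺ T. If C'' = (X''₁,…,X''_q) is a linear extension of the quotient topology T/T', then T' equals the product topology T|_{X''₁} ⋯ T|_{X''_q} on X = X''₁ ⊔ … ⊔ X''_q; in particular T' restricted to each block X''_i coincides with T restricted to X''_i. -/
variable {X : Type*}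

/-- A set composition of `S`: a finite sequence of nonempty, pairwise
disjoint sets whose union is `S`. -/
def IsSetComposition (C : List (Set X)) (S : Set X) : Prop :=
  (∀ A ∈ C, A.Nonempty) ∧ C.Pairwise Disjoint ∧ ⋃₀ {A | A ∈ C} = S

/-- `C` is a linear extension of (the restriction to `S` of) the topology `t`:
strict specialization increases the block index, and equivalent points lie in
the same block. -/
def IsLinExt (t : TopologicalSpace X) (S : Set X) (C : List (Set X)) : Prop :=
  IsSetComposition C S ∧
  ∀ i j : Fin C.length, ∀ x ∈ C.get i, ∀ y ∈ C.get j,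
    ((leT t x y ∧ ¬ leT t y x) → (i : ℕ) < (j : ℕ)) ∧
    (simT t x y → (i : ℕ) = (j : ℕ))


section AuxProof

lemma leT_refl (t : TopologicalSpace X) (x : X) : leT t x x := fun _ _ h => h

lemma leT_trans {t : TopologicalSpace X} {x y z : X} (h1 : leT t x y) (h2 : leT t y z) :
    leT t x z := fun U hU hx => h2 U hU (h1 U hU hx)

lemma leT_of_finer {t t' : TopologicalSpace X} (hf : finer t' t) {x y : X}
    (h : leT t' x y) : leT t x y := fun U hU hx => h U (hf U hU) hx

lemma minOpen_isOpen [Finite X] (t : TopologicalSpace X) (x : X) :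
    t.IsOpen {y | leT t x y} := by
  have heq : {y | leT t x y} = ⋂₀ {U : Set X | t.IsOpen U ∧ x ∈ U} := by
    ext y
    constructor
    · intro h U hU; exact h U hU.1 hU.2
    · intro h U hU hx; exact h U ⟨hU, hx⟩
  rw [heq]
  exact @Set.Finite.isOpen_sInter X t _ (Set.toFinite _) (fun U hU => hU.1)

lemma isOpen_iff_up [Finite X] (t : TopologicalSpace X) (U : Set X) :
    t.IsOpen U ↔ ∀ x ∈ U, ∀ y, leT t x y → y ∈ U := by
  constructor
  · intro hU x hx y hy; exact hy U hU hx
  · intro h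
    have heq : U = ⋃ x : U, {y | leT t x.1 y} := by
      ext y
      simp only [Set.mem_iUnion]
      constructor
      · intro hy; exact ⟨⟨y, hy⟩, leT_refl t y⟩
      · rintro ⟨⟨x, hx⟩, hle⟩; exact h x hx y hle
    rw [heq]
    exact @isOpen_iUnion X _ t _ (fun x => minOpen_isOpen t x.1)

lemma pair_connected {t : TopologicalSpace X} {b c : X} (h : leT t b c) :
    @IsConnected X t {b, c} := by
  letI := t
  have hc : ({c} : Set X) ⊆ ({b, c} : Set X) := by simp
  have hcl : ({b, c} : Set X) ⊆ closure {c} := by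
    intro z hz
    rcases hz with rfl | hz
    · rw [mem_closure_iff]
      intro o ho hbo
      exact ⟨c, h o ho hbo, rfl⟩
    · exact subset_closure hz
  exact isConnected_singleton.subset_closure hc hcl

lemma chain_connected {t : TopologicalSpace X} {x y : X}
    (h : Relation.ReflTransGen (fun a b => leT t a b ∨ leT t b a) x y) :
    ∃ K : Set X, @IsConnected X t K ∧ x ∈ K ∧ y ∈ K := by
  letI := t
  induction h with
  | refl => exact ⟨{x}, isConnected_singleton, rfl, rfl⟩
  | @tail b c hab hbc ih =>
    obtain ⟨K, hK, hx, hb⟩ := ih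
    have hpair : IsConnected ({b, c} : Set X) := by
      rcases hbc with h1 | h1
      · exact pair_connected h1
      · rw [Set.pair_comm]; exact pair_connected h1
    refine ⟨K ∪ {b, c}, hK.union ⟨b, hb, by simp⟩ hpair, Or.inl hx, Or.inr (by simp)⟩

lemma leT_quotTop_s19 (t t' : TopologicalSpace X) (x y : X) :
    leT (quotTop t t') x y ↔ quotRel t t' x y := by
  constructor
  · intro h
    refine h {z | quotRel t t' x z} ?_ Relation.ReflTransGen.refl
    intro a ha b hab
    exact Relation.ReflTransGen.trans ha hab
  · intro h U hU hx
    exact hU x hx y h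

end AuxProof

/-- If `C` is a linear extension of the quotient `T/T'` for `T' ⊚≺ T`, then `T'`
is the product over the blocks of `C` of the restrictions of `T`. -/
theorem adm_linExt_product [Finite X] (t t' : TopologicalSpace X) (h : adm t' t)
    (C : List (Set X)) (hC : IsLinExt (quotTop t t') Set.univ C) :
    (∀ U : Set X, t'.IsOpen U ↔
        ∀ i : Fin C.length, ∃ V : Set X, t.IsOpen V ∧ U ∩ C.get i = V ∩ C.get i) ∧
    (∀ A ∈ C, restrictT t' A = restrictT t A) := by
  obtain ⟨hf, hagreeC, hequiv⟩ := h
  obtain ⟨⟨hne, hdisj, huniv⟩, hext⟩ := hC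
  -- every point lies in some block
  have hidx : ∀ x : X, ∃ i : Fin C.length, x ∈ C.get i := by
    intro x
    have hx : x ∈ ⋃₀ {A | A ∈ C} := by rw [huniv]; trivial
    obtain ⟨A, hA, hxA⟩ := hx
    obtain ⟨i, hi⟩ := List.mem_iff_get.mp hA
    exact ⟨i, hi ▸ hxA⟩
  -- blocks are disjoint
  have hidx_unique : ∀ (i j : Fin C.length) (x : X), x ∈ C.get i → x ∈ C.get j → i = j := by
    intro i j x hi hj
    by_contra hne'
    rcases lt_or_gt_of_ne hne' with hlt | hlt
    · exact Set.disjoint_left.mp (List.pairwise_iff_get.mp hdisj i j hlt) hi hj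
    · exact Set.disjoint_left.mp (List.pairwise_iff_get.mp hdisj j i hlt) hj hi
  -- the quotient relation is monotone on block indices
  have hmono : ∀ {x y : X}, quotRel t t' x y → ∀ i j : Fin C.length,
      x ∈ C.get i → y ∈ C.get j → (i : ℕ) ≤ (j : ℕ) := by
    intro x y hq
    induction hq with
    | refl =>
      intro i j hi hj
      exact le_of_eq (congrArg Fin.val (hidx_unique i j x hi hj))
    | @tail b c hab hbc ih =>
      intro i j hi hj
      obtain ⟨k, hk⟩ := hidx b
      have h1 : (i : ℕ) ≤ (k : ℕ) := ih i k hi hk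
      have hstep : quotRel t t' b c := Relation.ReflTransGen.single hbc
      have h2 : (k : ℕ) ≤ (j : ℕ) := by
        by_cases hq2 : quotRel t t' c b
        · exact le_of_eq ((hext k j b hk c hj).2
            ⟨(leT_quotTop_s19 t t' b c).mpr hstep, (leT_quotTop_s19 t t' c b).mpr hq2⟩)
        · exact le_of_lt ((hext k j b hk c hj).1
            ⟨(leT_quotTop_s19 t t' b c).mpr hstep,
             fun hle => hq2 ((leT_quotTop_s19 t t' c b).mp hle)⟩)
      exact le_trans h1 h2
  -- key: within a single block, t-specialization is absorbed by t'-open sets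
  have hkey : ∀ (i : Fin C.length) (x y : X), x ∈ C.get i → y ∈ C.get i →
      leT t x y → ∀ U : Set X, t'.IsOpen U → x ∈ U → y ∈ U := by
    intro i x y hx hy hxy U hU hxU
    have hq1 : quotRel t t' x y := Relation.ReflTransGen.single (Or.inl hxy)
    have hq2 : quotRel t t' y x := by
      by_contra hq2
      have := (hext i i x hx y hy).1
        ⟨(leT_quotTop_s19 t t' x y).mpr hq1, fun hle => hq2 ((leT_quotTop_s19 t t' y x).mp hle)⟩
      exact lt_irrefl _ this
    have h3 := (hequiv x y).mp ⟨hq1, hq2⟩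
    obtain ⟨K, hK, hxK, hyK⟩ := chain_connected (t := t') h3.1
    have hagree := hagreeC K hK
    have hop : (restrictT t' K).IsOpen (Subtype.val ⁻¹' U) := ⟨U, hU, rfl⟩
    rw [hagree] at hop
    obtain ⟨W, hW, hWU⟩ := hop
    have hxW : x ∈ W := by
      have hm : (⟨x, hxK⟩ : K) ∈ Subtype.val ⁻¹' U := hxU
      rw [← hWU] at hm
      exact hm
    have hyW : y ∈ W := hxy W hW hxW
    have hm : (⟨y, hyK⟩ : K) ∈ Subtype.val ⁻¹' W := hyW
    rw [hWU] at hm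
    exact hm
  have main : ∀ U : Set X, t'.IsOpen U ↔
      ∀ i : Fin C.length, ∃ V : Set X, t.IsOpen V ∧ U ∩ C.get i = V ∩ C.get i := by
    intro U
    constructor
    · intro hU i
      refine ⟨{y | ∃ x ∈ U ∩ C.get i, leT t x y}, ?_, ?_⟩
      · rw [isOpen_iff_up]
        rintro a ⟨x, hx, hxa⟩ y hay
        exact ⟨x, hx, leT_trans hxa hay⟩
      · ext y
        constructor
        · rintro ⟨hyU, hyi⟩
          exact ⟨⟨y, ⟨hyU, hyi⟩, leT_refl t y⟩, hyi⟩
        · rintro ⟨⟨x, ⟨hxU, hxi⟩, hxy⟩, hyi⟩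
          exact ⟨hkey i x y hxi hyi hxy U hU hxU, hyi⟩
    · intro hyp
      rw [isOpen_iff_up]
      intro x hx y hle
      obtain ⟨i, hi⟩ := hidx x
      obtain ⟨j, hj⟩ := hidx y
      have hle' : leT t x y := leT_of_finer hf hle
      have hij : (i : ℕ) ≤ (j : ℕ) :=
        hmono (Relation.ReflTransGen.single (Or.inl hle')) i j hi hj
      have hji : (j : ℕ) ≤ (i : ℕ) :=
        hmono (Relation.ReflTransGen.single (Or.inr hle)) j i hj hi
      have hij' : i = j := Fin.ext (le_antisymm hij hji)
      subst hij'
      obtain ⟨V, hV, hVU⟩ := hyp i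
      have hxV : x ∈ V := by
        have hxUV : x ∈ U ∩ C.get i := ⟨hx, hi⟩
        rw [hVU] at hxUV
        exact hxUV.1
      have hyV : y ∈ V := hle V (hf V hV) hxV
      have : y ∈ V ∩ C.get i := ⟨hyV, hj⟩
      rw [← hVU] at this
      exact this.1
  refine ⟨main, ?_⟩
  intro A hA
  obtain ⟨i, hi⟩ := List.mem_iff_get.mp hA
  subst hi
  apply TopologicalSpace.ext
  ext W
  constructor
  · rintro ⟨U, hU, rfl⟩
    obtain ⟨V, hV, hVU⟩ := (main U).mp hU i
    refine ⟨V, hV, ?_⟩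
    ext a
    have haA : a.1 ∈ C.get i := a.2
    constructor
    · intro haV
      have : a.1 ∈ V ∩ C.get i := ⟨haV, haA⟩
      rw [← hVU] at this
      exact this.1
    · intro haU
      have : a.1 ∈ U ∩ C.get i := ⟨haU, haA⟩
      rw [hVU] at this
      exact this.1
  · rintro ⟨V, hV, rfl⟩
    exact ⟨V, hf V hV, rfl⟩
end
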